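/- arXiv:1708.07906 — 5 statements merged into one kernel-verified Lean document; each statement's English description precedes it below -/
import Mathlib

section
/- Every finite point set P in ℝ^d has a 1/(d+1)-centerpoint: a point c such that every closed halfspace containing c contains at least |P|/(d+1) points of P. -/
/-- Every finite point set in `ℝ^d` has a `1/(d+1)`-centerpoint: a point `c` such
that every closed halfspace containing `c` contains at least `|P|/(d+1)` points of `P`. -/
theorem stmt_1 (d : ℕ) (P : Finset (EuclideanSpace ℝ (Fin d))) :
    ∃ c : EuclideanSpace ℝ (Fin d),
      ∀ (z : EuclideanSpace ℝ (Fin d)) (b : ℝ),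
        b ≤ (inner ℝ z c : ℝ) →
        (P.card : ℝ) / (d + 1) ≤ ((P.filter fun q => b ≤ (inner ℝ z q : ℝ)).card : ℝ) := by
  classical
  set n := P.card with hn
  by_cases hn0 : n = 0
  · refine ⟨0, fun z b _ => ?_⟩
    rw [hn0]
    simp
  have hn1 : 1 ≤ n := Nat.one_le_iff_ne_zero.mpr hn0
  have hfr : Module.finrank ℝ (EuclideanSpace ℝ (Fin d)) = d := finrank_euclideanSpace_fin
  -- the family of "large" subsets of P
  set s : Finset (Finset (EuclideanSpace ℝ (Fin d))) :=
    P.powerset.filter (fun Q => d * n < (d + 1) * Q.card) with hs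
  set F : Finset (EuclideanSpace ℝ (Fin d)) → Set (EuclideanSpace ℝ (Fin d)) :=
    fun Q => convexHull ℝ (↑Q : Set (EuclideanSpace ℝ (Fin d))) with hF
  have h_convex : ∀ Q ∈ s, Convex ℝ (F Q) := fun Q _ => convex_convexHull ℝ _
  have h_inter : ∀ I ⊆ s, I.card ≤ Module.finrank ℝ (EuclideanSpace ℝ (Fin d)) + 1 →
      (⋂ Q ∈ I, F Q).Nonempty := by
    intro I hIs hIcard
    rw [hfr] at hIcard
    -- counting: the union of the complements misses some point of P
    set B : Finset (EuclideanSpace ℝ (Fin d)) := I.biUnion (fun Q => P \ Q) with hB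
    have hterm : ∀ Q ∈ I, (d + 1) * (P \ Q).card ≤ n - 1 := by
      intro Q hQ
      have hQs := hIs hQ
      rw [hs, Finset.mem_filter, Finset.mem_powerset] at hQs
      obtain ⟨hQP, hQbig⟩ := hQs
      have hcards : (P \ Q).card = n - Q.card := by
        rw [Finset.card_sdiff_of_subset hQP]
      have hQle : Q.card ≤ n := Finset.card_le_card hQP
      have : (d + 1) * (n - Q.card) ≤ n - 1 := by
        zify [hQle, hn1]
        nlinarith [hQbig]
      rw [hcards]
      exact this
    have hBcard : B.card ≤ n - 1 := by
      have h1 : B.card ≤ ∑ Q ∈ I, (P \ Q).card := Finset.card_biUnion_le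
      have h2 : (d + 1) * ∑ Q ∈ I, (P \ Q).card ≤ (d + 1) * (n - 1) := by
        rw [Finset.mul_sum]
        calc ∑ Q ∈ I, (d + 1) * (P \ Q).card ≤ ∑ _Q ∈ I, (n - 1) :=
              Finset.sum_le_sum hterm
          _ = I.card * (n - 1) := by rw [Finset.sum_const, smul_eq_mul]
          _ ≤ (d + 1) * (n - 1) := Nat.mul_le_mul_right _ hIcard
      have h3 : ∑ Q ∈ I, (P \ Q).card ≤ n - 1 := Nat.le_of_mul_le_mul_left h2 (by omega)
      omega
    have hBP : B ⊆ P := by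
      intro x hx
      rw [hB, Finset.mem_biUnion] at hx
      obtain ⟨Q, _, hxQ⟩ := hx
      exact (Finset.mem_sdiff.mp hxQ).1
    have hPB : (P \ B).Nonempty := by
      rw [← Finset.card_pos, Finset.card_sdiff_of_subset hBP]
      omega
    obtain ⟨p, hp⟩ := hPB
    rw [Finset.mem_sdiff] at hp
    refine ⟨p, Set.mem_biInter fun Q hQ => ?_⟩
    have hpQ : p ∈ Q := by
      by_contra hpq
      exact hp.2 (Finset.mem_biUnion.mpr ⟨Q, hQ, Finset.mem_sdiff.mpr ⟨hp.1, hpq⟩⟩)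
    exact subset_convexHull ℝ _ (Finset.mem_coe.mpr hpQ)
  obtain ⟨c, hc⟩ := Convex.helly_theorem' h_convex h_inter
  refine ⟨c, fun z b hb => ?_⟩
  by_contra hlt
  push_neg at hlt
  set T := P.filter fun q => b ≤ (inner ℝ z q : ℝ) with hT
  set m := T.card with hm
  have hmn : m ≤ n := Finset.card_filter_le _ _
  have hdm : (d + 1) * m < n := by
    have hd1 : (0:ℝ) < (d:ℝ) + 1 := by positivity
    have : ((d:ℝ) + 1) * m < n := by
      rw [mul_comm, ← lt_div_iff₀ hd1]
      exact hlt
    exact_mod_cast this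
  set Q : Finset (EuclideanSpace ℝ (Fin d)) := P \ T with hQ
  have hQcard : Q.card = n - m := Finset.card_sdiff_of_subset (Finset.filter_subset _ _)
  have hQs : Q ∈ s := by
    rw [hs, Finset.mem_filter, Finset.mem_powerset]
    refine ⟨Finset.sdiff_subset, ?_⟩
    rw [hQcard]
    zify [hmn]
    push_cast at hdm ⊢
    nlinarith [hdm]
  have hcQ : c ∈ F Q := Set.mem_iInter₂.mp hc Q hQs
  have hlin : IsLinearMap ℝ (fun x : EuclideanSpace ℝ (Fin d) => (inner ℝ z x : ℝ)) :=
    ⟨fun x y => inner_add_right z x y, fun r x => real_inner_smul_right z x r⟩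
  have hsub : (↑Q : Set (EuclideanSpace ℝ (Fin d))) ⊆
      {x : EuclideanSpace ℝ (Fin d) | (inner ℝ z x : ℝ) < b} := by
    intro q hq
    rw [Finset.mem_coe, hQ, Finset.mem_sdiff] at hq
    have : ¬ b ≤ (inner ℝ z q : ℝ) := by
      intro hbq
      exact hq.2 (Finset.mem_filter.mpr ⟨hq.1, hbq⟩)
    exact lt_of_not_ge this
  have : c ∈ {x : EuclideanSpace ℝ (Fin d) | (inner ℝ z x : ℝ) < b} :=
    convexHull_min hsub (convex_halfSpace_lt hlin b) hcQ
  exact absurd hb (not_le.mpr this)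
end

section
/- Sauer's lemma: for any range space Σ = (X, R) with VC dimension D, and any m > D, the shatter function satisfies π_R(m) ≤ Σ_{k=0}^{D} C(m, k). -/
open scoped Classical

/-- A finset `S` is shattered by the range family `R` if every subset of `S`
is the trace of some range. -/
def ShatteredBy {X : Type*} (R : Finset (Finset X)) (S : Finset X) : Prop :=
  ∀ T ⊆ S, ∃ H ∈ R, H ∩ S = T

/-- Sauer's lemma: if the VC dimension of `(X, R)` is `D` (i.e. every shattered set has
size at most `D`), then for every `m > D` the shatter function satisfies
`π_R(m) ≤ ∑_{k=0}^{D} C(m,k)`. -/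
theorem stmt_3 {X : Type*} [Fintype X] (R : Finset (Finset X)) (D m : ℕ)
    (hD : ∀ S : Finset X, ShatteredBy R S → S.card ≤ D) (hm : D < m) :
    ∀ S : Finset X, S.card = m →
      (R.image fun H => H ∩ S).card ≤ ∑ k ∈ Finset.range (D + 1), m.choose k := by
  intro S hS
  set 𝒜 : Finset (Finset X) := R.image fun H => H ∩ S with h𝒜
  have key : 𝒜.shatterer ⊆ (Finset.range (D + 1)).biUnion fun k => S.powersetCard k := by
    intro t ht
    rw [Finset.mem_shatterer] at ht
    -- t ⊆ S
    obtain ⟨u, hu, htu⟩ := ht.exists_superset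
    have huS : u ⊆ S := by
      rw [h𝒜, Finset.mem_image] at hu
      obtain ⟨H, _, rfl⟩ := hu
      exact Finset.inter_subset_right
    have htS : t ⊆ S := htu.trans huS
    -- t is shattered by R
    have hsh : ShatteredBy R t := by
      intro T hT
      obtain ⟨v, hv, hvt⟩ := ht hT
      rw [h𝒜, Finset.mem_image] at hv
      obtain ⟨H, hH, rfl⟩ := hv
      refine ⟨H, hH, ?_⟩
      rw [← hvt]
      rw [Finset.inter_comm t (H ∩ S), Finset.inter_assoc,
        Finset.inter_eq_right.2 htS]
    have := hD t hsh
    simp only [Finset.mem_biUnion, Finset.mem_range, Finset.mem_powersetCard]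
    exact ⟨t.card, Nat.lt_succ_of_le this, htS, rfl⟩
  calc 𝒜.card ≤ 𝒜.shatterer.card := Finset.card_le_card_shatterer 𝒜
    _ ≤ ((Finset.range (D + 1)).biUnion fun k => S.powersetCard k).card :=
        Finset.card_le_card key
    _ ≤ ∑ k ∈ Finset.range (D + 1), (S.powersetCard k).card := Finset.card_biUnion_le
    _ = ∑ k ∈ Finset.range (D + 1), m.choose k := by
        simp [Finset.card_powersetCard, hS]
end

section
/- Dichotomy of shattering: for a finite range space (X, R) and m ∈ ℕ, either there exists a subset S ⊆ X of size m shattered by R, or for every U ⊆ X with |U| ≥ m, the number of distinct traces |{H ∩ U : H ∈ R}| is at most Σ_{k=0}^{m-1} C(|U|, k) (polynomial in |U| of degree m-1). -/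
open scoped Classical

/-- Dichotomy of shattering: for a finite range space `(X, R)` and `m : ℕ`, either some
`m`-element subset of `X` is shattered by `R`, or for every `U ⊆ X` with `|U| ≥ m`
the number of traces on `U` is at most `∑_{k=0}^{m-1} C(|U|, k)`. -/
theorem stmt_4 {X : Type*} [Fintype X] (R : Finset (Finset X)) (m : ℕ) :
    (∃ S : Finset X, S.card = m ∧ ∀ T ⊆ S, ∃ H ∈ R, H ∩ S = T) ∨
    (∀ U : Finset X, m ≤ U.card →
      (R.image fun H => H ∩ U).card ≤ ∑ k ∈ Finset.range m, U.card.choose k) := by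
  rw [or_iff_not_imp_left]
  intro h U _
  set 𝒜 := R.image fun H => H ∩ U with h𝒜
  have h1 : 𝒜.card ≤ 𝒜.shatterer.card := Finset.card_le_card_shatterer _
  have hsub : 𝒜.shatterer ⊆ (Finset.range m).biUnion U.powersetCard := by
    intro S hS
    rw [Finset.mem_shatterer] at hS
    have hSU : S ⊆ U := by
      obtain ⟨t, ht, hst⟩ := hS.exists_superset
      obtain ⟨H, _, rfl⟩ := Finset.mem_image.1 ht
      exact hst.trans Finset.inter_subset_right
    have hcard : S.card < m := by
      by_contra hc
      push_neg at hc
      obtain ⟨S', hS'sub, hS'card⟩ := Finset.exists_subset_card_eq hc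
      apply h
      refine ⟨S', hS'card, fun T hT => ?_⟩
      obtain ⟨u, hu, huT⟩ := (hS.mono_right hS'sub) hT
      obtain ⟨H, hH, rfl⟩ := Finset.mem_image.1 hu
      refine ⟨H, hH, ?_⟩
      have hS'U : S' ⊆ U := hS'sub.trans hSU
      rw [← huT]
      ext x
      simp only [Finset.mem_inter]
      constructor
      · rintro ⟨hx, hs⟩; exact ⟨hs, hx, hS'U hs⟩
      · rintro ⟨hs, hx, _⟩; exact ⟨hx, hs⟩
    exact Finset.mem_biUnion.2 ⟨S.card, Finset.mem_range.2 hcard,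
      Finset.mem_powersetCard.2 ⟨hSU, rfl⟩⟩
  calc 𝒜.card ≤ 𝒜.shatterer.card := h1
    _ ≤ ((Finset.range m).biUnion U.powersetCard).card := Finset.card_le_card hsub
    _ ≤ ∑ k ∈ Finset.range m, (U.powersetCard k).card := Finset.card_biUnion_le
    _ = ∑ k ∈ Finset.range m, U.card.choose k := by
        simp [Finset.card_powersetCard]
end

section
/- Let W be symmetric nonnegative with positive row sums, let L = D - W be the Laplacian and 𝓛 = I - D^{-1/2}WD^{-1/2} the normalized Laplacian. If λ₁,…,λₙ are the eigenvalues of D^{-1/2}WD^{-1/2} with orthonormal eigenvectors U, then the normalized Laplacian of the PageRank completion W̄ equals U(I - α(I-(1-α)Λ)^{-1})U^T; in particular 𝓛_W and 𝓛_{W̄} are simultaneously diagonalizable. -/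
open Matrix

private lemma aux_pow (n : ℕ)
    (U : Matrix (Fin n) (Fin n) ℝ) (lam : Fin n → ℝ)
    (hU : U * Uᵀ = 1) (hU' : Uᵀ * U = 1)
    (P Q : Matrix (Fin n) (Fin n) ℝ) (hPQ : P * Q = 1) (hQP : Q * P = 1) (k : ℕ) :
    (Q * (U * Matrix.diagonal lam * Uᵀ) * P) ^ k =
      Q * U * Matrix.diagonal (fun i => lam i ^ k) * Uᵀ * P := by
  induction k with
  | zero =>
      have h1 : Matrix.diagonal (fun i : Fin n => lam i ^ 0) = 1 := by simp
      rw [pow_zero, h1, Matrix.mul_one, Matrix.mul_assoc Q U Uᵀ, hU, Matrix.mul_one, hQP]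
  | succ k ih =>
      rw [pow_succ, ih]
      have h2 : (fun i => lam i ^ (k + 1)) = fun i => lam i ^ k * lam i :=
        funext fun i => pow_succ _ _
      rw [h2, ← Matrix.diagonal_mul_diagonal]
      have h3 : Q * U * Matrix.diagonal (fun i => lam i ^ k) * Uᵀ * P *
          (Q * (U * Matrix.diagonal lam * Uᵀ) * P) =
          Q * U * (Matrix.diagonal (fun i => lam i ^ k) * ((Uᵀ * (P * Q) * U) *
            Matrix.diagonal lam)) * (Uᵀ * P) := by
        simp only [Matrix.mul_assoc]
      rw [h3, hPQ, Matrix.mul_one, hU', Matrix.one_mul]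
      simp only [Matrix.mul_assoc]

private lemma aux_tsum (n : ℕ) (α : ℝ) (hα : 0 < α) (hα1 : α < 1)
    (U : Matrix (Fin n) (Fin n) ℝ) (lam : Fin n → ℝ)
    (hU : U * Uᵀ = 1) (hU' : Uᵀ * U = 1) (hlam : ∀ i, |lam i| ≤ 1)
    (P Q : Matrix (Fin n) (Fin n) ℝ) (hPQ : P * Q = 1) (hQP : Q * P = 1) :
    (∑' k : ℕ, (α * (1 - α) ^ k) • (Q * (U * Matrix.diagonal lam * Uᵀ) * P) ^ k) =
      Q * U * Matrix.diagonal (fun i => α / (1 - (1 - α) * lam i)) * Uᵀ * P := by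
  have habs : ∀ i, |(1 - α) * lam i| < 1 := by
    intro i
    rw [abs_mul]
    calc |1 - α| * |lam i| ≤ |1 - α| * 1 :=
          mul_le_mul_of_nonneg_left (hlam i) (abs_nonneg _)
      _ = |1 - α| := mul_one _
      _ < 1 := by rw [abs_of_pos (by linarith)]; linarith
  let L0 : (Fin n → ℝ) →ₗ[ℝ] Matrix (Fin n) (Fin n) ℝ :=
    { toFun := fun f => Q * U * Matrix.diagonal f * Uᵀ * P
      map_add' := by
        intro f g
        have hd : Matrix.diagonal (f + g) = Matrix.diagonal f + Matrix.diagonal g := by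
          rw [Matrix.diagonal_add]; rfl
        simp only [hd, Matrix.mul_add, Matrix.add_mul]
      map_smul' := by
        intro c f
        simp only [Matrix.diagonal_smul, Matrix.mul_smul, Matrix.smul_mul,
          RingHom.id_apply] }
  let L := LinearMap.toContinuousLinearMap L0
  have hterm : ∀ k : ℕ, (α * (1 - α) ^ k) • (Q * (U * Matrix.diagonal lam * Uᵀ) * P) ^ k =
      L (fun i => α * ((1 - α) * lam i) ^ k) := by
    intro k
    rw [aux_pow n U lam hU hU' P Q hPQ hQP k]
    show _ = Q * U * Matrix.diagonal (fun i => α * ((1 - α) * lam i) ^ k) * Uᵀ * P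
    have h4 : (fun i => α * ((1 - α) * lam i) ^ k) =
        (α * (1 - α) ^ k) • (fun i => lam i ^ k) := by
      funext i
      simp only [Pi.smul_apply, smul_eq_mul, mul_pow]
      ring
    rw [h4, Matrix.diagonal_smul]
    simp only [Matrix.mul_smul, Matrix.smul_mul]
  have hsummable : Summable (fun k : ℕ => fun i => α * ((1 - α) * lam i) ^ k) := by
    rw [Pi.summable]
    intro i
    exact (summable_geometric_of_abs_lt_one (habs i)).mul_left α
  have htsum_pi : (∑' k : ℕ, fun i => α * ((1 - α) * lam i) ^ k) =
      fun i => α / (1 - (1 - α) * lam i) := by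
    funext i
    rw [tsum_apply hsummable, tsum_mul_left, tsum_geometric_of_abs_lt_one (habs i),
      div_eq_mul_inv]
  calc (∑' k : ℕ, (α * (1 - α) ^ k) • (Q * (U * Matrix.diagonal lam * Uᵀ) * P) ^ k)
      = ∑' k : ℕ, L (fun i => α * ((1 - α) * lam i) ^ k) := tsum_congr hterm
    _ = L (∑' k : ℕ, fun i => α * ((1 - α) * lam i) ^ k) :=
        (L.map_tsum hsummable).symm
    _ = L (fun i => α / (1 - (1 - α) * lam i)) := by rw [htsum_pi]
    _ = Q * U * Matrix.diagonal (fun i => α / (1 - (1 - α) * lam i)) * Uᵀ * P := rfl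

/-- Simultaneous diagonalizability: if `D^{-1/2} W D^{-1/2} = U Λ Uᵀ` with `U` orthogonal
and `Λ = diag(λᵢ)`, `|λᵢ| ≤ 1`, then the normalized Laplacian of the PageRank completion
`W̄ = D·(α ∑_{k≥0}(1-α)^k (D⁻¹W)^k)` equals `U (I - α(I-(1-α)Λ)⁻¹) Uᵀ`;
in particular it is diagonalized by the same `U` as `𝓛_W = I - D^{-1/2} W D^{-1/2}`. -/
theorem stmt_12 (n : ℕ) (W : Matrix (Fin n) (Fin n) ℝ) (α : ℝ)
    (hα : 0 < α) (hα1 : α < 1)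
    (hsym : Wᵀ = W) (hW0 : ∀ i j, 0 ≤ W i j) (hd : ∀ i, 0 < ∑ j, W i j)
    (U : Matrix (Fin n) (Fin n) ℝ) (lam : Fin n → ℝ)
    (hU : U * Uᵀ = 1) (hU' : Uᵀ * U = 1) (hlam : ∀ i, |lam i| ≤ 1)
    (hdiag : Matrix.diagonal (fun i => (Real.sqrt (∑ j, W i j))⁻¹) * W *
        Matrix.diagonal (fun i => (Real.sqrt (∑ j, W i j))⁻¹) =
      U * Matrix.diagonal lam * Uᵀ) :
    (1 : Matrix (Fin n) (Fin n) ℝ) -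
      Matrix.diagonal (fun i => (Real.sqrt (∑ j, W i j))⁻¹) *
        (Matrix.diagonal (fun i => ∑ j, W i j) *
          (∑' k : ℕ, (α * (1 - α) ^ k) •
            (Matrix.diagonal (fun i => (∑ j, W i j)⁻¹) * W) ^ k)) *
        Matrix.diagonal (fun i => (Real.sqrt (∑ j, W i j))⁻¹) =
    U * Matrix.diagonal (fun i => 1 - α / (1 - (1 - α) * lam i)) * Uᵀ := by
  set d : Fin n → ℝ := fun i => ∑ j, W i j with hd_def
  have hspos : ∀ i, 0 < Real.sqrt (d i) := fun i => Real.sqrt_pos.2 (hd i)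
  set Dh : Matrix (Fin n) (Fin n) ℝ := Matrix.diagonal (fun i => Real.sqrt (d i)) with hDh
  set Dhi : Matrix (Fin n) (Fin n) ℝ :=
    Matrix.diagonal (fun i => (Real.sqrt (d i))⁻¹) with hDhi
  have hf1 : (fun i => Real.sqrt (d i) * (Real.sqrt (d i))⁻¹) = fun _ : Fin n => (1 : ℝ) :=
    funext fun i => mul_inv_cancel₀ (ne_of_gt (hspos i))
  have hf2 : (fun i => (Real.sqrt (d i))⁻¹ * Real.sqrt (d i)) = fun _ : Fin n => (1 : ℝ) :=
    funext fun i => inv_mul_cancel₀ (ne_of_gt (hspos i))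
  have hf3 : (fun i => Real.sqrt (d i) * Real.sqrt (d i)) = d :=
    funext fun i => Real.mul_self_sqrt (le_of_lt (hd i))
  have hf4 : (fun i => (Real.sqrt (d i))⁻¹ * (Real.sqrt (d i))⁻¹) = fun i => (d i)⁻¹ := by
    funext i
    rw [← mul_inv, Real.mul_self_sqrt (le_of_lt (hd i))]
  have hPQ : Dh * Dhi = 1 := by
    rw [hDh, hDhi, Matrix.diagonal_mul_diagonal, hf1, Matrix.diagonal_one]
  have hQP : Dhi * Dh = 1 := by
    rw [hDh, hDhi, Matrix.diagonal_mul_diagonal, hf2, Matrix.diagonal_one]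
  have hDD : Matrix.diagonal d = Dh * Dh := by
    rw [hDh, Matrix.diagonal_mul_diagonal, hf3]
  have hDinv : Matrix.diagonal (fun i => (d i)⁻¹) = Dhi * Dhi := by
    rw [hDhi, Matrix.diagonal_mul_diagonal, hf4]
  have hMW : Matrix.diagonal (fun i => (d i)⁻¹) * W =
      Dhi * (U * Matrix.diagonal lam * Uᵀ) * Dh := by
    rw [← hdiag, hDinv]
    calc Dhi * Dhi * W = Dhi * Dhi * W * (Dhi * Dh) := by rw [hQP, Matrix.mul_one]
      _ = Dhi * (Dhi * W * Dhi) * Dh := by simp only [Matrix.mul_assoc]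
  rw [hMW, aux_tsum n α hα hα1 U lam hU hU' hlam Dh Dhi hPQ hQP, hDD]
  have h5 : Dhi * (Dh * Dh *
      (Dhi * U * Matrix.diagonal (fun i => α / (1 - (1 - α) * lam i)) * Uᵀ * Dh)) * Dhi =
      (Dhi * Dh) * ((Dh * Dhi) * (U * Matrix.diagonal (fun i => α / (1 - (1 - α) * lam i)) *
        Uᵀ)) * (Dh * Dhi) := by
    simp only [Matrix.mul_assoc]
  rw [h5, hPQ, hQP, Matrix.one_mul, Matrix.one_mul, Matrix.mul_one]
  have hsub : Matrix.diagonal (fun i => 1 - α / (1 - (1 - α) * lam i)) =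
      1 - Matrix.diagonal (fun i => α / (1 - (1 - α) * lam i)) := by
    rw [← Matrix.diagonal_one, Matrix.diagonal_sub]
  rw [hsub, Matrix.mul_sub, Matrix.sub_mul, Matrix.mul_one, hU]
end

section
/- Spectral densification: for W symmetric nonnegative with positive row sums, α ∈ (0,1), and W̄ the PageRank completion, for all x ∈ ℝⁿ: α·x^T L_W x ≤ (1/(1-α))·x^T L_{W̄} x ≤ (1/α)·x^T L_W x, where L_W = D - W and L_{W̄} = D - W̄. Hence G and (1/(1-α))·Ḡ are (1/α)-spectrally similar. -/
open Matrix

set_option maxHeartbeats 1000000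

/-- Spectral densification: for all `x`,
`α·xᵀL_W x ≤ (1/(1-α))·xᵀL_{W̄} x ≤ (1/α)·xᵀL_W x`, where `L_W = D - W` and
`L_{W̄} = D - W̄` with `W̄` the PageRank completion of `W`. -/
theorem stmt_13 (n : ℕ) (W : Matrix (Fin n) (Fin n) ℝ) (α : ℝ)
    (hα : 0 < α) (hα1 : α < 1)
    (hsym : Wᵀ = W) (hW0 : ∀ i j, 0 ≤ W i j) (hd : ∀ i, 0 < ∑ j, W i j) :
    ∀ x : Fin n → ℝ,
      α * (x ⬝ᵥ ((Matrix.diagonal (fun i => ∑ j, W i j) - W) *ᵥ x)) ≤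
        (1 / (1 - α)) * (x ⬝ᵥ ((Matrix.diagonal (fun i => ∑ j, W i j) -
          Matrix.diagonal (fun i => ∑ j, W i j) *
            (∑' k : ℕ, (α * (1 - α) ^ k) •
              (Matrix.diagonal (fun i => (∑ j, W i j)⁻¹) * W) ^ k)) *ᵥ x)) ∧
      (1 / (1 - α)) * (x ⬝ᵥ ((Matrix.diagonal (fun i => ∑ j, W i j) -
          Matrix.diagonal (fun i => ∑ j, W i j) *
            (∑' k : ℕ, (α * (1 - α) ^ k) •
              (Matrix.diagonal (fun i => (∑ j, W i j)⁻¹) * W) ^ k)) *ᵥ x)) ≤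
        (1 / α) * (x ⬝ᵥ ((Matrix.diagonal (fun i => ∑ j, W i j) - W) *ᵥ x)) := by
  set d : Fin n → ℝ := fun i => ∑ j, W i j with hddef
  set D : Matrix (Fin n) (Fin n) ℝ := Matrix.diagonal d with hDdef
  set P : Matrix (Fin n) (Fin n) ℝ := Matrix.diagonal (fun i => (d i)⁻¹) * W with hPdef
  set L : Matrix (Fin n) (Fin n) ℝ := D - W with hLdef
  set M : Matrix (Fin n) (Fin n) ℝ := D - (1 - α) • W with hMdef
  have hα1' : (0:ℝ) < 1 - α := by linarith
  have hWs : ∀ i j, W j i = W i j := fun i j => by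
    conv_rhs => rw [← hsym]
    rfl
  -- quadratic form computations
  have hqD : ∀ v : Fin n → ℝ, v ⬝ᵥ (D *ᵥ v) = ∑ i, d i * v i ^ 2 := by
    intro v
    simp only [hDdef, dotProduct, Matrix.mulVec_diagonal]
    exact Finset.sum_congr rfl fun i _ => by ring
  have hqW : ∀ v : Fin n → ℝ, v ⬝ᵥ (W *ᵥ v) = ∑ i, ∑ j, W i j * (v i * v j) := by
    intro v
    simp only [dotProduct, Matrix.mulVec, Finset.mul_sum]
    exact Finset.sum_congr rfl fun i _ => Finset.sum_congr rfl fun j _ => by ring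
  have key : ∀ (v : Fin n → ℝ) (ε : ℝ), ε ^ 2 = 1 →
      0 ≤ (∑ i, d i * v i ^ 2) + ε * (∑ i, ∑ j, W i j * (v i * v j)) := by
    intro v ε hε
    have hswap : ∑ i, ∑ j, W i j * v j ^ 2 = ∑ i, ∑ j, W i j * v i ^ 2 := by
      rw [Finset.sum_comm]
      exact Finset.sum_congr rfl fun j _ => Finset.sum_congr rfl fun i _ => by rw [hWs]
    have hdsum : ∑ i, d i * v i ^ 2 = ∑ i, ∑ j, W i j * v i ^ 2 := by
      refine Finset.sum_congr rfl fun i _ => ?_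
      rw [hddef]
      simp [Finset.sum_mul]
    have expand : ∑ i, ∑ j, W i j * (v i + ε * v j) ^ 2 =
        (∑ i, ∑ j, W i j * v i ^ 2) + 2 * ε * (∑ i, ∑ j, W i j * (v i * v j)) +
          ε ^ 2 * (∑ i, ∑ j, W i j * v j ^ 2) := by
      have hterm : ∀ i j, W i j * (v i + ε * v j) ^ 2 =
          W i j * v i ^ 2 + 2 * ε * (W i j * (v i * v j)) + ε ^ 2 * (W i j * v j ^ 2) :=
        fun i j => by ring
      simp_rw [hterm, Finset.sum_add_distrib, ← Finset.mul_sum]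
    have hnn : 0 ≤ ∑ i, ∑ j, W i j * (v i + ε * v j) ^ 2 :=
      Finset.sum_nonneg fun i _ => Finset.sum_nonneg fun j _ =>
        mul_nonneg (hW0 i j) (sq_nonneg _)
    rw [expand, hε, hswap, one_mul] at hnn
    nlinarith [hnn, hdsum]
  have hqL : ∀ v : Fin n → ℝ, v ⬝ᵥ (L *ᵥ v) = v ⬝ᵥ (D *ᵥ v) - v ⬝ᵥ (W *ᵥ v) := by
    intro v
    rw [hLdef, Matrix.sub_mulVec, dotProduct_sub]
  have hL0 : ∀ v : Fin n → ℝ, 0 ≤ v ⬝ᵥ (L *ᵥ v) := by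
    intro v
    have := key v (-1) (by ring)
    rw [hqL, hqD, hqW]
    linarith
  have hDW : ∀ v : Fin n → ℝ, v ⬝ᵥ (L *ᵥ v) ≤ 2 * (v ⬝ᵥ (D *ᵥ v)) := by
    intro v
    have := key v 1 (by ring)
    rw [hqL, hqD, hqW]
    nlinarith [this]
  have hqD0 : ∀ v : Fin n → ℝ, 0 ≤ v ⬝ᵥ (D *ᵥ v) := by
    intro v
    rw [hqD]
    exact Finset.sum_nonneg fun i _ => mul_nonneg (hd i).le (sq_nonneg _)
  have hqDpos : ∀ v : Fin n → ℝ, v ≠ 0 → 0 < v ⬝ᵥ (D *ᵥ v) := by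
    intro v hv
    obtain ⟨i, hi⟩ : ∃ i, v i ≠ 0 := by
      by_contra h
      push_neg at h
      exact hv (funext h)
    rw [hqD]
    refine Finset.sum_pos' (fun j _ => mul_nonneg (hd j).le (sq_nonneg _)) ⟨i, Finset.mem_univ i, ?_⟩
    exact mul_pos (hd i) (by positivity)
  have hMdecomp : M = α • D + (1 - α) • L := by
    rw [hMdef, hLdef]
    ext i j
    simp only [Matrix.sub_apply, Matrix.add_apply, Matrix.smul_apply, smul_eq_mul]
    ring
  have hqM : ∀ v : Fin n → ℝ,
      v ⬝ᵥ (M *ᵥ v) = α * (v ⬝ᵥ (D *ᵥ v)) + (1 - α) * (v ⬝ᵥ (L *ᵥ v)) := by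
    intro v
    rw [hMdecomp, Matrix.add_mulVec, dotProduct_add, Matrix.smul_mulVec,
      Matrix.smul_mulVec, dotProduct_smul, dotProduct_smul,
      smul_eq_mul, smul_eq_mul]
  have hqM0 : ∀ v : Fin n → ℝ, 0 ≤ v ⬝ᵥ (M *ᵥ v) := by
    intro v
    rw [hqM]
    have := hqD0 v
    have := hL0 v
    nlinarith
  -- M is invertible
  have hMdet : IsUnit M.det := by
    rw [isUnit_iff_ne_zero]
    intro h
    obtain ⟨v, hv0, hv⟩ := Matrix.exists_mulVec_eq_zero_iff.2 h
    have h1 : v ⬝ᵥ (M *ᵥ v) = 0 := by rw [hv, dotProduct_zero]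
    have h2 := hqM v
    have h3 := hqDpos v hv0
    have h4 := hL0 v
    nlinarith
  have hMM : M * M⁻¹ = 1 := Matrix.mul_nonsing_inv M hMdet
  have hM'M : M⁻¹ * M = 1 := Matrix.nonsing_inv_mul M hMdet
  -- entries of powers of P
  have hdne : ∀ i, d i ≠ 0 := fun i => (hd i).ne'
  have hPapp : ∀ i j, P i j = (d i)⁻¹ * W i j := by
    intro i j
    rw [hPdef]
    simp [Matrix.diagonal_mul]
  have hPk : ∀ k : ℕ, (∀ i j, 0 ≤ (P ^ k) i j) ∧ (∀ i, ∑ j, (P ^ k) i j = 1) := by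
    intro k
    induction k with
    | zero =>
      constructor
      · intro i j
        simp [Matrix.one_apply]
        split <;> norm_num
      · intro i
        simp [Matrix.one_apply]
    | succ k ih =>
      rw [pow_succ]
      constructor
      · intro i j
        rw [Matrix.mul_apply]
        refine Finset.sum_nonneg fun l _ => mul_nonneg (ih.1 i l) ?_
        rw [hPapp]
        exact mul_nonneg (inv_nonneg.2 (hd l).le) (hW0 l j)
      · intro i
        simp_rw [Matrix.mul_apply]
        rw [Finset.sum_comm]
        have : ∀ l, ∑ j, (P ^ k) i l * P l j = (P ^ k) i l := by
          intro l
          rw [← Finset.mul_sum]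
          have hrow : ∑ j, P l j = 1 := by
            simp_rw [hPapp]
            rw [← Finset.mul_sum, hddef]
            exact inv_mul_cancel₀ (hdne l)
          rw [hrow, mul_one]
        simp_rw [this]
        exact ih.2 i
  have hPle : ∀ (k : ℕ) i j, (P ^ k) i j ≤ 1 := by
    intro k i j
    have := (hPk k).2 i
    calc (P ^ k) i j ≤ ∑ j', (P ^ k) i j' :=
          Finset.single_le_sum (fun l _ => (hPk k).1 i l) (Finset.mem_univ j)
      _ = 1 := this
  -- summability
  have hgeo : Summable (fun k : ℕ => α * (1 - α) ^ k) :=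
    (summable_geometric_of_lt_one hα1'.le (by linarith)).mul_left α
  have hse : ∀ i j, Summable (fun k : ℕ => α * (1 - α) ^ k * (P ^ k) i j) := by
    intro i j
    refine Summable.of_nonneg_of_le (fun k => ?_) (fun k => ?_) hgeo
    · exact mul_nonneg (by positivity) ((hPk k).1 i j)
    · calc α * (1 - α) ^ k * (P ^ k) i j ≤ α * (1 - α) ^ k * 1 := by
            refine mul_le_mul_of_nonneg_left (hPle k i j) (by positivity)
        _ = α * (1 - α) ^ k := mul_one _
  have hsumm : Summable (fun k : ℕ => (α * (1 - α) ^ k) • P ^ k) := by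
    refine Pi.summable.2 ?_
    intro i
    rw [Pi.summable]
    intro j
    have : (fun k : ℕ => ((α * (1 - α) ^ k) • P ^ k) i j) =
        fun k => α * (1 - α) ^ k * (P ^ k) i j := by
      funext k
      simp [Matrix.smul_apply]
    rw [this]
    exact hse i j
  set T : Matrix (Fin n) (Fin n) ℝ := ∑' k : ℕ, (α * (1 - α) ^ k) • P ^ k with hTdef
  have hTapp : ∀ i j, T i j = ∑' k : ℕ, α * (1 - α) ^ k * (P ^ k) i j := by
    intro i j
    rw [hTdef]; erw [tsum_apply hsumm, tsum_apply (Pi.summable.1 hsumm i)]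
    exact tsum_congr fun k => by simp [Matrix.smul_apply]
  -- geometric series identity
  set C : Matrix (Fin n) (Fin n) ℝ := 1 - (1 - α) • P with hCdef
  have hgC : ∀ k : ℕ, ((α * (1 - α) ^ k) • P ^ k) * C =
      (α * (1 - α) ^ k) • P ^ k - (α * (1 - α) ^ (k + 1)) • P ^ (k + 1) := by
    intro k
    rw [hCdef, mul_sub, mul_one, Matrix.smul_mul, Matrix.mul_smul, smul_smul, ← pow_succ]
    congr 2
    ring
  have hTC : T * C = α • (1 : Matrix (Fin n) (Fin n) ℝ) := by
    ext i j
    rw [Matrix.mul_apply]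
    have step1 : ∀ l, T i l * C l j = ∑' k : ℕ, α * (1 - α) ^ k * (P ^ k) i l * C l j := by
      intro l
      rw [hTapp i l, tsum_mul_right]
    simp_rw [step1]
    rw [← Summable.tsum_finsetSum (fun l _ => (hse i l).mul_right _)]
    have step2 : ∀ k : ℕ, (∑ l, α * (1 - α) ^ k * (P ^ k) i l * C l j) =
        α * (1 - α) ^ k * (P ^ k) i j - α * (1 - α) ^ (k + 1) * (P ^ (k + 1)) i j := by
      intro k
      have := congrFun (congrFun (hgC k) i) j
      rw [Matrix.mul_apply] at this
      simp only [Matrix.sub_apply, Matrix.smul_apply, smul_eq_mul] at this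
      rw [← this]
    rw [tsum_congr step2]
    have hse1 : Summable (fun k : ℕ => α * (1 - α) ^ (k + 1) * (P ^ (k + 1)) i j) :=
      (summable_nat_add_iff 1).2 (hse i j)
    rw [Summable.tsum_sub (hse i j) hse1, Summable.tsum_eq_zero_add (hse i j)]
    simp [Matrix.smul_apply, Matrix.one_apply]
  have hDinvD : Matrix.diagonal (fun i => (d i)⁻¹) * D = 1 := by
    rw [hDdef, Matrix.diagonal_mul_diagonal]
    rw [show (fun i => (d i)⁻¹ * d i) = fun _ => (1:ℝ) from funext fun i => inv_mul_cancel₀ (hdne i),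
      Matrix.diagonal_one]
  have hC_eq : C = Matrix.diagonal (fun i => (d i)⁻¹) * M := by
    rw [hCdef, hMdef, mul_sub, hDinvD, Matrix.mul_smul, hPdef]
  have hCinv : C * (M⁻¹ * D) = 1 := by
    rw [hC_eq, mul_assoc, ← mul_assoc M, hMM, one_mul, hDinvD]
  have hT : T = α • (M⁻¹ * D) := by
    calc T = T * (C * (M⁻¹ * D)) := by rw [hCinv, mul_one]
      _ = (T * C) * (M⁻¹ * D) := by rw [mul_assoc]
      _ = α • (M⁻¹ * D) := by rw [hTC, Matrix.smul_mul, one_mul]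
  -- identities for the completed Laplacian
  have hscal : (1 - α) • L = M - α • D := by
    rw [hLdef, hMdef]
    ext i j
    simp only [Matrix.sub_apply, Matrix.smul_apply, smul_eq_mul]
    ring
  have hA : D - D * T = (1 - α) • (D * (M⁻¹ * L)) := by
    rw [hT, Matrix.mul_smul]
    have : (1 - α) • (D * (M⁻¹ * L)) = D * (M⁻¹ * ((1 - α) • L)) := by
      rw [Matrix.mul_smul, Matrix.mul_smul]
    rw [this, hscal, mul_sub, Matrix.mul_smul, mul_sub, ← mul_assoc, ← mul_assoc,
      mul_assoc D M⁻¹ M, hM'M, mul_one]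
    rw [Matrix.mul_smul, mul_assoc]
  have hB : α • (D * (M⁻¹ * L)) = L - (1 - α) • (L * (M⁻¹ * L)) := by
    have h1 : α • D = M - (1 - α) • L := by
      rw [hscal]
      abel
    calc α • (D * (M⁻¹ * L)) = (α • D) * (M⁻¹ * L) := by rw [Matrix.smul_mul]
      _ = (M - (1 - α) • L) * (M⁻¹ * L) := by rw [h1]
      _ = M * (M⁻¹ * L) - (1 - α) • (L * (M⁻¹ * L)) := by
          rw [sub_mul, Matrix.smul_mul]
      _ = L - (1 - α) • (L * (M⁻¹ * L)) := by rw [← mul_assoc, hMM, one_mul]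
  -- symmetry of L
  have hLsym : Lᵀ = L := by
    rw [hLdef, Matrix.transpose_sub, hsym, hDdef, Matrix.diagonal_transpose]
  -- per-vector conclusion
  intro x
  set q : ℝ := x ⬝ᵥ (L *ᵥ x) with hqdef
  set u : Fin n → ℝ := L *ᵥ x with hudef
  set y : Fin n → ℝ := M⁻¹ *ᵥ u with hydef
  set r : ℝ := u ⬝ᵥ y with hrdef
  have hMy : M *ᵥ y = u := by
    rw [hydef, Matrix.mulVec_mulVec, hMM, Matrix.one_mulVec]
  have hq0 : 0 ≤ q := hL0 x
  -- r as a quadratic form in y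
  have hr_qM : r = y ⬝ᵥ (M *ᵥ y) := by
    rw [hrdef, ← hMy, dotProduct_comm]
  have hr0 : 0 ≤ r := hr_qM ▸ hqM0 y
  -- r' = x ⬝ᵥ (L * (M⁻¹ * L)) *ᵥ x equals r
  have hxLy : ∀ v : Fin n → ℝ, x ⬝ᵥ (L *ᵥ v) = u ⬝ᵥ v := by
    intro v
    rw [Matrix.dotProduct_mulVec, ← Matrix.mulVec_transpose, hLsym, ← hudef]
  have hr' : x ⬝ᵥ ((L * (M⁻¹ * L)) *ᵥ x) = r := by
    rw [← Matrix.mulVec_mulVec, ← Matrix.mulVec_mulVec, hxLy]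
  -- s = x ⬝ᵥ (D * (M⁻¹ * L)) *ᵥ x
  set s : ℝ := x ⬝ᵥ ((D * (M⁻¹ * L)) *ᵥ x) with hsdef
  have hαs : α * s = q - (1 - α) * r := by
    have := congrArg (fun A : Matrix (Fin n) (Fin n) ℝ => x ⬝ᵥ (A *ᵥ x)) hB
    simp only [Matrix.smul_mulVec, dotProduct_smul, smul_eq_mul,
      Matrix.sub_mulVec, dotProduct_sub] at this
    rw [hsdef, this, hr', hqdef]
  -- the statement's completed Laplacian quadratic form
  have hbq : x ⬝ᵥ ((D - D * T) *ᵥ x) = (1 - α) * s := by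
    have := congrArg (fun A : Matrix (Fin n) (Fin n) ℝ => x ⬝ᵥ (A *ᵥ x)) hA
    simp only [Matrix.smul_mulVec, dotProduct_smul, smul_eq_mul] at this
    rw [this, hsdef]
  -- L ⪯ (1+α) M at y
  have hLM : y ⬝ᵥ (L *ᵥ y) ≤ (1 + α) * (y ⬝ᵥ (M *ᵥ y)) := by
    have h1 := hqM y
    have h2 := hDW y
    have h3 := hqD0 y
    have h4 := hL0 y
    nlinarith [mul_le_mul_of_nonneg_left h2 (mul_nonneg hα.le hα.le),
      mul_nonneg (mul_nonneg hα.le hα1'.le) h3]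
  -- key upper bound r ≤ (1+α) q
  have hrq : r ≤ (1 + α) * q := by
    set c : ℝ := 1 + α with hcdef
    have hc : 0 < c := by rw [hcdef]; linarith
    set z : Fin n → ℝ := x - c⁻¹ • y with hzdef
    have hz0 : 0 ≤ z ⬝ᵥ (L *ᵥ z) := hL0 z
    have hyLx : y ⬝ᵥ (L *ᵥ x) = r := by
      rw [← hudef, hrdef, dotProduct_comm]
    have hxLy' : x ⬝ᵥ (L *ᵥ y) = r := by rw [hxLy y, hrdef]
    have hp : y ⬝ᵥ (L *ᵥ y) ≤ c * r := by
      calc y ⬝ᵥ (L *ᵥ y) ≤ (1 + α) * (y ⬝ᵥ (M *ᵥ y)) := hLM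
        _ = c * r := by rw [hcdef, hr_qM]
    have hexp : z ⬝ᵥ (L *ᵥ z) =
        q - c⁻¹ * r - c⁻¹ * r + c⁻¹ * c⁻¹ * (y ⬝ᵥ (L *ᵥ y)) := by
      rw [hzdef, Matrix.mulVec_sub, Matrix.mulVec_smul, sub_dotProduct,
        dotProduct_sub, dotProduct_sub, smul_dotProduct,
        dotProduct_smul, dotProduct_smul, smul_dotProduct]
      simp only [smul_eq_mul]
      rw [hqdef, hxLy', hyLx]
      ring
    have hcc : c⁻¹ * c = 1 := inv_mul_cancel₀ hc.ne'
    have h5 : c⁻¹ * c⁻¹ * (y ⬝ᵥ (L *ᵥ y)) ≤ c⁻¹ * r := by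
      have : c⁻¹ * c⁻¹ * (c * r) = c⁻¹ * r := by
        field_simp
      nlinarith [mul_le_mul_of_nonneg_left hp (mul_nonneg (inv_nonneg.2 hc.le) (inv_nonneg.2 hc.le))]
    have h6 : 0 ≤ q - c⁻¹ * r := by
      rw [hexp] at hz0
      linarith
    have h7 : 0 ≤ c * (q - c⁻¹ * r) := mul_nonneg hc.le h6
    have h8 : c * (q - c⁻¹ * r) = c * q - r := by
      field_simp
    linarith [h7, h8.symm ▸ h7]
  -- final assembly
  have hbq' : x ⬝ᵥ ((D - D * T) *ᵥ x) = (1 - α) * s := hbq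
  constructor
  · -- α q ≤ (1/(1-α)) b
    rw [hbq']
    have : (1 / (1 - α)) * ((1 - α) * s) = s := by
      field_simp
    rw [this]
    -- α q ≤ s  from  α s = q - (1-α) r  and  r ≤ (1+α) q
    nlinarith [hαs, hrq, hq0]
  · rw [hbq']
    have : (1 / (1 - α)) * ((1 - α) * s) = s := by field_simp
    rw [this]
    -- s ≤ (1/α) q
    rw [div_mul_eq_mul_div, le_div_iff₀ hα, one_mul]
    nlinarith [hαs, hr0]
end
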